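/- Let G be a finite connected cubic graph and let (I1,I2) be a pair of disjoint independent sets satisfying Conditions (I) and (II). Suppose the cycle setup holds for C', let u be a red vertex of C' that is an isolated vertex of the subgraph of G induced on the red vertices (a red P1), and let u' be a neighbor of u in G that does not lie on C', say u' ∈ I_i with i ∈ {1,2}. Then (I_i \ {u'}) ∪ {u} is an independent set disjoint from I_{3−i}, and this new pair of disjoint independent sets again satisfies Conditions (I) and (II). -/

import Mathlib

/-! Write `a = u i₀`. Its neighbours are `u'` and the two black vertices of `C'` flanking it,
each of which has a red neighbour other than `a`. Removing the isolated red vertex `a` from the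
red subgraph destroys one component, and adding a vertex back creates at most one, none if that
vertex has a red neighbour. So trading `a` for the only neighbour `x` of `a` in one of the two
sets preserves Condition (I), does not increase the number of red components, and decreases it
strictly if `x` has a red neighbour other than `a`. By (I), `a` has a neighbour in `I_{3-i}`; by (II),
a flanking vertex cannot be its only one there. So both flanking vertices lie in `I_{3-i}`, `u'`
is the only neighbour of `a` in `I_i`, and trading `u'` for `a` preserves (I) and (II). -/

open SimpleGraph

variable {V : Type*}

/-- A finset `I` is an independent set of `G`. -/
def FinsetIndep (G : SimpleGraph V) (I : Finset V) : Prop :=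
  ∀ u ∈ I, ∀ v ∈ I, ¬ G.Adj u v

/-- Condition (I): `|I1| + |I2|` is maximum among all pairs of disjoint
independent sets of `G`. -/
def CondI (G : SimpleGraph V) (I1 I2 : Finset V) : Prop :=
  ∀ J1 J2 : Finset V, Disjoint J1 J2 → FinsetIndep G J1 → FinsetIndep G J2 →
    J1.card + J2.card ≤ I1.card + I2.card

/-- The set of red vertices: the vertices outside `I1 ∪ I2`. -/
def redSet (I1 I2 : Finset V) : Set V := {v | v ∉ I1 ∧ v ∉ I2}

/-- The number of connected components of the subgraph of `G` induced on the
red vertices. -/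
noncomputable def numRedComp (G : SimpleGraph V) (I1 I2 : Finset V) : ℕ :=
  Nat.card ((G.induce (redSet I1 I2)).ConnectedComponent)

/-- Condition (II): subject to Condition (I), the number of connected
components of the subgraph induced on the red vertices is minimum. -/
def CondII (G : SimpleGraph V) (I1 I2 : Finset V) : Prop :=
  ∀ J1 J2 : Finset V, Disjoint J1 J2 → FinsetIndep G J1 → FinsetIndep G J2 →
    CondI G J1 J2 → numRedComp G I1 I2 ≤ numRedComp G J1 J2

/-- The auxiliary graph `H` on the red vertices: two distinct red vertices are
adjacent iff their distance in `G` is at most 2. -/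
def Hgraph (G : SimpleGraph V) (I1 I2 : Finset V) : SimpleGraph (redSet I1 I2) where
  Adj x y := x ≠ y ∧ G.edist (x : V) (y : V) ≤ 2
  symm := by
    constructor
    rintro x y ⟨hne, hd⟩
    exact ⟨hne.symm, by rwa [SimpleGraph.edist_comm]⟩
  loopless := by constructor; rintro x ⟨hne, -⟩; exact hne rfl

/-- The number of black vertices on the cycle `C'`: `k` in the no-red-`P2`
case and `k - 1` in the red-`P2` case. -/
def blackCount (k : ℕ) (p2 : Bool) : ℕ := if p2 then k - 1 else k

/-- The cycle setup: `u 0, …, u (k-1)` are red vertices forming the vertex set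
of a connected component of `H`, and `C'` is a cycle of `G` which is either
`u 0, v 0, u 1, v 1, …, u (k-1), v (k-1), u 0` (no-red-`P2` case, `p2 = false`,
`2k` distinct vertices), or
`u 0, v 0, u 1, v 1, …, v (k-2), u (k-1), u 0` (red-`P2` case, `p2 = true`,
`2k - 1` distinct vertices, with `u (k-1)` adjacent to `u 0`). -/
def CycleSetup (G : SimpleGraph V) (I1 I2 : Finset V) (k : ℕ)
    (u v : ℕ → V) (p2 : Bool) : Prop :=
  3 ≤ k ∧
  (∀ i < k, u i ∈ redSet I1 I2) ∧
  (∀ i < blackCount k p2, v i ∈ I1 ∨ v i ∈ I2) ∧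
  (∀ i < k, ∀ j < k, u i = u j → i = j) ∧
  (∀ i < blackCount k p2, ∀ j < blackCount k p2, v i = v j → i = j) ∧
  (∀ i < k, ∀ j < blackCount k p2, u i ≠ v j) ∧
  (∀ i < blackCount k p2, G.Adj (u i) (v i)) ∧
  (∀ i < blackCount k p2, G.Adj (v i) (u ((i + 1) % k))) ∧
  (p2 = true → G.Adj (u (k - 1)) (u 0)) ∧
  (∃ c : (Hgraph G I1 I2).ConnectedComponent,
      c.supp = {x : redSet I1 I2 | ∃ i < k, (x : V) = u i})

/-- The vertex set of the cycle `C'`. -/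
def cycleVerts (k : ℕ) (u v : ℕ → V) (p2 : Bool) : Set V :=
  {x | (∃ i < k, x = u i) ∨ (∃ i < blackCount k p2, x = v i)}

namespace SimpleGraph

variable {G : SimpleGraph V}

lemma reachable_induce_sdiff_singleton {s : Set V} {a x y : V} (hiso : ∀ z ∈ s, ¬ G.Adj a z)
    (hx : x ∈ s \ {a}) (hy : y ∈ s \ {a}) (h : (G.induce s).Reachable ⟨x, hx.1⟩ ⟨y, hy.1⟩) :
    (G.induce (s \ {a})).Reachable ⟨x, hx⟩ ⟨y, hy⟩ := by
  obtain ⟨w⟩ := h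
  let W : G.Walk x y := w.map (Embedding.induce s).toHom
  have hWs : ∀ z ∈ W.support, z ∈ s := by
    intro z hz
    obtain ⟨z', -, rfl⟩ := List.mem_map.mp (w.support_map _ ▸ hz)
    exact z'.2
  refine ⟨W.induce (s \ {a}) fun z hz => Set.mem_sdiff_singleton.mpr ⟨hWs z hz, fun hza => ?_⟩⟩
  subst hza
  by_cases hnil : W.Nil
  · rw [Walk.nil_iff_support_eq.mp hnil, List.mem_singleton] at hz
    exact hx.2 hz.symm
  · obtain ⟨b, hb, hab⟩ := adj_of_mem_walk_support W hnil hz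
    exact hiso b (hWs b hb) hab

lemma eq_or_eq_or_eq_of_adj_of_degree_eq_three [Fintype V] [DecidableRel G.Adj] {a x y z w : V}
    (hdeg : G.degree a = 3) (hx : G.Adj a x) (hy : G.Adj a y) (hz : G.Adj a z)
    (hxy : x ≠ y) (hxz : x ≠ z) (hyz : y ≠ z) (hw : G.Adj a w) : w = x ∨ w = y ∨ w = z := by
  classical
  have hsub : ({x, y, z} : Finset V) ⊆ G.neighborFinset a := by
    simp [Finset.insert_subset_iff, hx, hy, hz]
  have hsup : G.neighborFinset a ⊆ {x, y, z} := by
    refine (Finset.eq_of_subset_of_card_le hsub ?_).symm.subset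
    rw [card_neighborFinset_eq_degree, hdeg, Finset.card_eq_three.mpr ⟨x, y, z, hxy, hxz, hyz, rfl⟩]
  simpa using hsup ((mem_neighborFinset G a w).mpr hw)

variable [Finite V]

lemma card_connectedComponent_induce_sdiff_singleton_add_one_le {s : Set V} {a : V} (ha : a ∈ s)
    (hiso : ∀ z ∈ s, ¬ G.Adj a z) :
    Nat.card (G.induce (s \ {a})).ConnectedComponent + 1 ≤
      Nat.card (G.induce s).ConnectedComponent := by
  let φ := ConnectedComponent.map (G.induceHomOfLE (s := s \ {a}) Set.sdiff_subset).toHom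
  let F := Sum.elim φ fun _ : Unit => (G.induce s).connectedComponentMk ⟨a, ha⟩
  have hφ : Function.Injective φ := by
    intro c d
    refine ConnectedComponent.ind₂ (fun x y hxy => ?_) c d
    exact ConnectedComponent.sound <|
      reachable_induce_sdiff_singleton hiso x.2 y.2 (ConnectedComponent.exact hxy)
  have hF : Function.Injective F := by
    refine hφ.sumElim (fun _ _ _ => rfl) fun c _ => ?_
    refine ConnectedComponent.ind (fun x hxa => ?_) c
    have hne : (⟨x, x.2.1⟩ : s) ≠ ⟨a, ha⟩ := fun h => x.2.2 (congrArg Subtype.val h)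
    obtain ⟨z, hz⟩ := (mem_support _).mp
      (mem_support_of_reachable hne.symm (ConnectedComponent.exact hxa).symm)
    exact hiso z z.2 hz
  simpa [Nat.card_sum] using Nat.card_le_card_of_injective F hF

lemma card_connectedComponent_induce_insert_le (s : Set V) (b : V) :
    Nat.card (G.induce (insert b s)).ConnectedComponent ≤
      Nat.card (G.induce s).ConnectedComponent + 1 := by
  let φ := ConnectedComponent.map (G.induceHomOfLE (Set.subset_insert b s)).toHom
  let F := Sum.elim φ fun _ : Unit =>
    (G.induce (insert b s)).connectedComponentMk ⟨b, Set.mem_insert b s⟩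
  have hF : Function.Surjective F := by
    refine ConnectedComponent.ind fun ⟨x, hx⟩ => ?_
    rcases Set.mem_insert_iff.mp hx with rfl | hxs
    · exact ⟨Sum.inr (), rfl⟩
    · exact ⟨Sum.inl ((G.induce s).connectedComponentMk ⟨x, hxs⟩), rfl⟩
  simpa [Nat.card_sum] using Nat.card_le_card_of_surjective F hF

lemma card_connectedComponent_induce_insert_le_of_adj {s : Set V} {b c : V} (hc : c ∈ s)
    (hbc : G.Adj b c) :
    Nat.card (G.induce (insert b s)).ConnectedComponent ≤
      Nat.card (G.induce s).ConnectedComponent := by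
  let φ := ConnectedComponent.map (G.induceHomOfLE (Set.subset_insert b s)).toHom
  have hφ : Function.Surjective φ := by
    refine ConnectedComponent.ind fun ⟨x, hx⟩ => ?_
    rcases Set.mem_insert_iff.mp hx with rfl | hxs
    · refine ⟨(G.induce s).connectedComponentMk ⟨c, hc⟩, ConnectedComponent.sound ?_⟩
      exact Adj.reachable (G := G.induce (insert x s)) hbc.symm
    · exact ⟨(G.induce s).connectedComponentMk ⟨x, hxs⟩, rfl⟩
  exact Nat.card_le_card_of_surjective φ hφ

end SimpleGraph

section Pairs

variable {G : SimpleGraph V} {A B : Finset V}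

lemma FinsetIndep.mono {I J : Finset V} (hJ : FinsetIndep G J) (hIJ : I ⊆ J) : FinsetIndep G I :=
  fun x hx y hy => hJ x (hIJ hx) y (hIJ hy)

lemma finsetIndep_insert [DecidableEq V] {I : Finset V} {a : V} :
    FinsetIndep G (insert a I) ↔ FinsetIndep G I ∧ ∀ y ∈ I, ¬ G.Adj a y := by
  refine ⟨fun h => ⟨h.mono (Finset.subset_insert a I), fun y hy => h a (Finset.mem_insert_self a I) y
    (Finset.mem_insert_of_mem hy)⟩, fun ⟨hI, ha⟩ x hx y hy => ?_⟩
  rcases Finset.mem_insert.mp hx with rfl | hxI <;> rcases Finset.mem_insert.mp hy with rfl | hyI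
  · exact G.loopless.irrefl _
  · exact ha y hyI
  · exact fun hxy => ha x hxI hxy.symm
  · exact hI x hxI y hyI

lemma CondI.symm (h : CondI G A B) : CondI G B A := fun J1 J2 hd h1 h2 =>
  (h J1 J2 hd h1 h2).trans_eq (Nat.add_comm _ _)

lemma CondI.of_card_add_card_eq {A' B' : Finset V} (h : CondI G A B)
    (hcard : A'.card + B'.card = A.card + B.card) : CondI G A' B' := fun J1 J2 hd h1 h2 =>
  (h J1 J2 hd h1 h2).trans_eq hcard.symm

lemma redSet_comm (A B : Finset V) : redSet A B = redSet B A :=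
  Set.ext fun _ => and_comm

lemma numRedComp_comm (G : SimpleGraph V) (A B : Finset V) :
    numRedComp G A B = numRedComp G B A := by
  rw [numRedComp, numRedComp, redSet_comm]

lemma CondII.symm (h : CondII G A B) : CondII G B A := fun J1 J2 hd h1 h2 hI =>
  numRedComp_comm G B A ▸ h J1 J2 hd h1 h2 hI

lemma redSet_insert_erase [DecidableEq V] {a x : V} (hxa : x ≠ a) (hxB : x ∉ B) :
    redSet (insert a (A.erase x)) B = insert x (redSet A B \ {a}) := by
  ext z
  by_cases hzx : z = x
  · subst hzx
    simp [redSet, hxa, hxB]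
  · simp only [redSet, Set.mem_ofPred_eq, Finset.mem_insert, Finset.mem_erase, Set.mem_insert_iff,
      Set.mem_sdiff, Set.mem_singleton_iff, hzx]
    tauto

variable [Finite V]

lemma numRedComp_insert_erase_le [DecidableEq V] {a x : V} (ha : a ∈ redSet A B)
    (hiso : ∀ z ∈ redSet A B, ¬ G.Adj a z) (hxa : x ≠ a) (hxB : x ∉ B) :
    numRedComp G (insert a (A.erase x)) B ≤ numRedComp G A B := by
  rw [numRedComp, numRedComp, redSet_insert_erase hxa hxB]
  have := G.card_connectedComponent_induce_sdiff_singleton_add_one_le ha hiso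
  have := G.card_connectedComponent_induce_insert_le (redSet A B \ {a}) x
  omega

lemma numRedComp_insert_erase_lt [DecidableEq V] {a x c : V} (ha : a ∈ redSet A B)
    (hiso : ∀ z ∈ redSet A B, ¬ G.Adj a z) (hxa : x ≠ a) (hxB : x ∉ B)
    (hc : c ∈ redSet A B) (hca : c ≠ a) (hxc : G.Adj x c) :
    numRedComp G (insert a (A.erase x)) B < numRedComp G A B := by
  rw [numRedComp, numRedComp, redSet_insert_erase hxa hxB]
  have := G.card_connectedComponent_induce_sdiff_singleton_add_one_le ha hiso
  have := G.card_connectedComponent_induce_insert_le_of_adj (s := redSet A B \ {a}) ⟨hc, hca⟩ hxc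
  omega

end Pairs

structure IsOptimalPair (G : SimpleGraph V) (A B : Finset V) : Prop where
  disjoint : Disjoint A B
  indep_left : FinsetIndep G A
  indep_right : FinsetIndep G B
  condI : CondI G A B
  condII : CondII G A B

namespace IsOptimalPair

variable {G : SimpleGraph V} {A B : Finset V}

lemma symm (h : IsOptimalPair G A B) : IsOptimalPair G B A :=
  ⟨h.disjoint.symm, h.indep_right, h.indep_left, h.condI.symm, h.condII.symm⟩

variable [DecidableEq V] {a : V}

lemma exists_adj_mem_right (h : IsOptimalPair G A B) (ha : a ∈ redSet A B) :
    ∃ y ∈ B, G.Adj a y := by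
  by_contra! hB
  have hindep : FinsetIndep G (insert a B) := finsetIndep_insert.mpr ⟨h.indep_right, hB⟩
  have hdisj : Disjoint A (insert a B) := Finset.disjoint_insert_right.mpr ⟨ha.1, h.disjoint⟩
  have := h.condI A (insert a B) hdisj h.indep_left hindep
  rw [Finset.card_insert_of_notMem ha.2] at this
  omega

variable [Finite V] {x : V}

lemma swap_left (h : IsOptimalPair G A B) (ha : a ∈ redSet A B)
    (hiso : ∀ z ∈ redSet A B, ¬ G.Adj a z) (hx : x ∈ A) (huniq : ∀ y ∈ A, G.Adj a y → y = x) :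
    IsOptimalPair G (insert a (A.erase x)) B := by
  have hxB : x ∉ B := Finset.disjoint_left.mp h.disjoint hx
  have hxa : x ≠ a := fun hxa => ha.1 (hxa ▸ hx)
  have hcard : (insert a (A.erase x)).card = A.card := by
    rw [Finset.card_insert_of_notMem fun haA => ha.1 (Finset.mem_of_mem_erase haA),
      Finset.card_erase_add_one hx]
  have hindep : FinsetIndep G (insert a (A.erase x)) :=
    finsetIndep_insert.mpr ⟨h.indep_left.mono (Finset.erase_subset x A),
      fun y hy hay => (Finset.mem_erase.mp hy).1 (huniq y (Finset.mem_erase.mp hy).2 hay)⟩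
  refine ⟨Finset.disjoint_insert_left.mpr ⟨ha.2, h.disjoint.mono_left (Finset.erase_subset x A)⟩,
    hindep, h.indep_right, h.condI.of_card_add_card_eq (by rw [hcard]), ?_⟩
  intro J1 J2 hd h1 h2 hJ
  exact (numRedComp_insert_erase_le ha hiso hxa hxB).trans (h.condII J1 J2 hd h1 h2 hJ)

lemma eq_of_adj_of_unique_adj_left (h : IsOptimalPair G A B) (ha : a ∈ redSet A B)
    (hiso : ∀ z ∈ redSet A B, ¬ G.Adj a z) (hx : x ∈ A) (huniq : ∀ y ∈ A, G.Adj a y → y = x)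
    {c : V} (hc : c ∈ redSet A B) (hxc : G.Adj x c) : c = a := by
  by_contra hca
  have hswap := h.swap_left ha hiso hx huniq
  have := h.condII _ _ hswap.disjoint hswap.indep_left hswap.indep_right hswap.condI
  have := numRedComp_insert_erase_lt ha hiso (fun hxa => ha.1 (hxa ▸ hx))
    (Finset.disjoint_left.mp h.disjoint hx) hc hca hxc
  omega

variable {y z : V}

lemma mem_right_of_neighbours (h : IsOptimalPair G A B) (ha : a ∈ redSet A B)
    (hiso : ∀ z ∈ redSet A B, ¬ G.Adj a z) (hN : ∀ w, G.Adj a w → w = x ∨ w = y ∨ w = z)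
    (hx : x ∈ A) (hz : ∃ c ∈ redSet A B, c ≠ a ∧ G.Adj z c) : y ∈ B := by
  have hxB : x ∉ B := Finset.disjoint_left.mp h.disjoint hx
  by_contra hyB
  by_cases hzB : z ∈ B
  · obtain ⟨c, hc, hca, hzc⟩ := hz
    rw [redSet_comm] at ha hiso hc
    refine hca (h.symm.eq_of_adj_of_unique_adj_left ha hiso hzB (fun w hwB haw => ?_) hc hzc)
    rcases hN w haw with rfl | rfl | rfl
    · exact absurd hwB hxB
    · exact absurd hwB hyB
    · rfl
  · obtain ⟨w, hwB, haw⟩ := h.exists_adj_mem_right ha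
    rcases hN w haw with rfl | rfl | rfl
    · exact hxB hwB
    · exact hyB hwB
    · exact hzB hwB

lemma swap_left_of_neighbours (h : IsOptimalPair G A B) (ha : a ∈ redSet A B)
    (hiso : ∀ z ∈ redSet A B, ¬ G.Adj a z) (hN : ∀ w, G.Adj a w → w = x ∨ w = y ∨ w = z)
    (hx : x ∈ A) (hy : ∃ c ∈ redSet A B, c ≠ a ∧ G.Adj y c)
    (hz : ∃ c ∈ redSet A B, c ≠ a ∧ G.Adj z c) :
    IsOptimalPair G (insert a (A.erase x)) B := by
  have hyB := h.mem_right_of_neighbours ha hiso hN hx hz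
  have hzB := h.mem_right_of_neighbours ha hiso (fun w hw => (hN w hw).imp_right Or.symm) hx hy
  refine h.swap_left ha hiso hx fun w hwA haw => ?_
  rcases hN w haw with rfl | rfl | rfl
  · rfl
  · exact absurd hyB (Finset.disjoint_left.mp h.disjoint hwA)
  · exact absurd hzB (Finset.disjoint_left.mp h.disjoint hwA)

end IsOptimalPair

lemma add_one_mod_ne_self {j k : ℕ} (hk : 2 ≤ k) (hj : j < k) : (j + 1) % k ≠ j := by
  rcases Nat.lt_or_ge (j + 1) k with hlt | hge
  · rw [Nat.mod_eq_of_lt hlt]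
    omega
  · rw [show j + 1 = k by omega, Nat.mod_self]
    omega

lemma blackCount_le (k : ℕ) (p2 : Bool) : blackCount k p2 ≤ k := by
  cases p2 <;> simp [blackCount]

namespace CycleSetup

variable {G : SimpleGraph V} {I1 I2 : Finset V} {k : ℕ} {u v : ℕ → V} {p2 : Bool}

lemma exists_red_adj_ne (hcyc : CycleSetup G I1 I2 k u v p2) {j : ℕ} (hj : j < blackCount k p2)
    (a : V) : ∃ c ∈ redSet I1 I2, c ≠ a ∧ G.Adj (v j) c := by
  obtain ⟨hk, hred, -, huinj, -, -, hadj, hadj', -⟩ := hcyc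
  have hjk : j < k := hj.trans_le (blackCount_le k p2)
  have hnext : (j + 1) % k < k := Nat.mod_lt _ (by omega)
  by_cases hja : u j = a
  · refine ⟨u ((j + 1) % k), hred _ hnext, fun h => ?_, hadj' j hj⟩
    exact add_one_mod_ne_self (by omega) hjk (huinj _ hnext j hjk (h.trans hja.symm))
  · exact ⟨u j, hred j hjk, hja, (hadj j hj).symm⟩

lemma lt_blackCount_and_exists_adj_of_isolated (hcyc : CycleSetup G I1 I2 k u v p2) {i : ℕ} (hi : i < k)
    (hiso : ∀ z ∈ redSet I1 I2, ¬ G.Adj (u i) z) :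
    i < blackCount k p2 ∧ ∃ j < blackCount k p2, j ≠ i ∧ G.Adj (u i) (v j) := by
  obtain ⟨hk, hred, -, -, -, -, -, hadj', hp2, -⟩ := hcyc
  -- in the red-`P2` case, `u (k - 1)` and `u 0` are adjacent red vertices, so neither is `u i`
  have hend : p2 = true → i ≠ 0 ∧ i ≠ k - 1 := fun hp => by
    refine ⟨fun hi0 => hiso _ (hred (k - 1) (by omega)) ?_, fun hik => hiso _ (hred 0 (by omega)) ?_⟩
    · exact hi0 ▸ (hp2 hp).symm
    · exact hik ▸ hp2 hp
  have hpred : ∃ j < blackCount k p2, (j + 1) % k = i := by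
    rcases Nat.eq_zero_or_pos i with rfl | hpos
    · cases p2
      · exact ⟨k - 1, by simp [blackCount]; omega, by rw [Nat.sub_add_cancel (by omega), Nat.mod_self]⟩
      · exact absurd rfl (hend rfl).1
    · refine ⟨i - 1, ?_, by rw [Nat.sub_add_cancel hpos, Nat.mod_eq_of_lt hi]⟩
      cases p2 <;> simp [blackCount] <;> omega
  obtain ⟨j, hj, hji⟩ := hpred
  refine ⟨?_, j, hj, fun h => add_one_mod_ne_self (by omega) hi (h ▸ hji), hji ▸ (hadj' j hj).symm⟩
  cases p2
  · exact hi
  · exact show i < k - 1 by have := (hend rfl).2; omega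

lemma exists_neighbours_of_isolated [Fintype V] [DecidableRel G.Adj]
    (hcyc : CycleSetup G I1 I2 k u v p2) {i : ℕ} (hi : i < k) (hdeg : G.degree (u i) = 3)
    (hiso : ∀ z ∈ redSet I1 I2, ¬ G.Adj (u i) z) {u' : V} (hadj : G.Adj (u i) u')
    (hu' : u' ∉ cycleVerts k u v p2) :
    ∃ y z, (∀ w, G.Adj (u i) w → w = u' ∨ w = y ∨ w = z) ∧
      (∃ c ∈ redSet I1 I2, c ≠ u i ∧ G.Adj y c) ∧ (∃ c ∈ redSet I1 I2, c ≠ u i ∧ G.Adj z c) := by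
  obtain ⟨hib, j, hj, hji, hadjj⟩ := hcyc.lt_blackCount_and_exists_adj_of_isolated hi hiso
  refine ⟨v i, v j, fun w hw => ?_, hcyc.exists_red_adj_ne hib _, hcyc.exists_red_adj_ne hj _⟩
  obtain ⟨-, -, -, -, hvinj, -, hadj_v, -⟩ := hcyc
  exact G.eq_or_eq_or_eq_of_adj_of_degree_eq_three hdeg hadj (hadj_v i hib) hadjj
    (fun h => hu' (Or.inr ⟨i, hib, h⟩)) (fun h => hu' (Or.inr ⟨j, hj, h⟩))
    (fun h => hji (hvinj j hj i hib h.symm)) hw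

end CycleSetup

theorem switch_redP1_preserves_conditions_general
    {V : Type*} [Fintype V] [DecidableEq V] (G : SimpleGraph V) [DecidableRel G.Adj]
    (hcubic : ∀ v : V, G.degree v = 3)
    (I1 I2 : Finset V) (hdisj : Disjoint I1 I2)
    (hI1 : FinsetIndep G I1) (hI2 : FinsetIndep G I2)
    (hmax : CondI G I1 I2) (hmin : CondII G I1 I2)
    (k : ℕ) (u v : ℕ → V) (p2 : Bool)
    (hcyc : CycleSetup G I1 I2 k u v p2)
    (i₀ : ℕ) (hi₀ : i₀ < k)
    (hP1 : ∀ y : V, y ∉ I1 → y ∉ I2 → ¬ G.Adj (u i₀) y)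
    (u' : V) (hadj : G.Adj (u i₀) u') (hu' : u' ∉ cycleVerts k u v p2) :
    (u' ∈ I1 →
      FinsetIndep G (insert (u i₀) (I1.erase u')) ∧
      Disjoint (insert (u i₀) (I1.erase u')) I2 ∧
      CondI G (insert (u i₀) (I1.erase u')) I2 ∧
      CondII G (insert (u i₀) (I1.erase u')) I2) ∧
    (u' ∈ I2 →
      FinsetIndep G (insert (u i₀) (I2.erase u')) ∧
      Disjoint I1 (insert (u i₀) (I2.erase u')) ∧
      CondI G I1 (insert (u i₀) (I2.erase u')) ∧
      CondII G I1 (insert (u i₀) (I2.erase u'))) := by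
  have hP : IsOptimalPair G I1 I2 := ⟨hdisj, hI1, hI2, hmax, hmin⟩
  have hred : u i₀ ∈ redSet I1 I2 := hcyc.2.1 i₀ hi₀
  have hiso : ∀ z ∈ redSet I1 I2, ¬ G.Adj (u i₀) z := fun z hz => hP1 z hz.1 hz.2
  obtain ⟨y, z, hN, hy, hz⟩ := hcyc.exists_neighbours_of_isolated hi₀ (hcubic _) hiso hadj hu'
  refine ⟨fun hu'I1 => ?_, fun hu'I2 => ?_⟩
  · have h := hP.swap_left_of_neighbours hred hiso hN hu'I1 hy hz
    exact ⟨h.indep_left, h.disjoint, h.condI, h.condII⟩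
  · rw [redSet_comm] at hred hiso hy hz
    have h := (hP.symm.swap_left_of_neighbours hred hiso hN hu'I2 hy hz).symm
    exact ⟨h.indep_right, h.disjoint, h.condI, h.condII⟩

/-- Under Conditions (I) and (II) and the cycle setup: if `u i₀` is a red `P1`
of `C'` (isolated among the red vertices in `G`) and `u'` is a neighbour of
`u i₀` off `C'` with `u' ∈ I_i`, then switching `u i₀` with `u'` again yields a
pair of disjoint independent sets satisfying Conditions (I) and (II). -/
theorem switch_redP1_preserves_conditions
    {V : Type*} [Fintype V] [DecidableEq V] (G : SimpleGraph V) [DecidableRel G.Adj]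
    (hconn : G.Connected) (hcubic : ∀ v : V, G.degree v = 3)
    (I1 I2 : Finset V) (hdisj : Disjoint I1 I2)
    (hI1 : FinsetIndep G I1) (hI2 : FinsetIndep G I2)
    (hmax : CondI G I1 I2) (hmin : CondII G I1 I2)
    (k : ℕ) (u v : ℕ → V) (p2 : Bool)
    (hcyc : CycleSetup G I1 I2 k u v p2)
    (i₀ : ℕ) (hi₀ : i₀ < k)
    (hP1 : ∀ y : V, y ∉ I1 → y ∉ I2 → ¬ G.Adj (u i₀) y)
    (u' : V) (hadj : G.Adj (u i₀) u') (hu' : u' ∉ cycleVerts k u v p2) :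
    (u' ∈ I1 →
      FinsetIndep G (insert (u i₀) (I1.erase u')) ∧
      Disjoint (insert (u i₀) (I1.erase u')) I2 ∧
      CondI G (insert (u i₀) (I1.erase u')) I2 ∧
      CondII G (insert (u i₀) (I1.erase u')) I2) ∧
    (u' ∈ I2 →
      FinsetIndep G (insert (u i₀) (I2.erase u')) ∧
      Disjoint I1 (insert (u i₀) (I2.erase u')) ∧
      CondI G I1 (insert (u i₀) (I2.erase u')) ∧
      CondII G I1 (insert (u i₀) (I2.erase u'))) :=
  switch_redP1_preserves_conditions_general G hcubic I1 I2 hdisj hI1 hI2 hmax hmin k u v p2 hcyc i₀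
    hi₀ hP1 u' hadj hu'
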